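/- arXiv:2603.07555 — 4 statements merged into one kernel-verified Lean document; each statement's English description precedes it below -/
import Mathlib

section
/- Let H be a game with no cycle of total weight zero such that the winning region of Max (the set of vertices of MP-value > 0) is empty, and let φ be a reducing potential for H. Then there exists a vertex v ∈ N_H such that φ(v) is minimal among the φ-values of all vertices of H. -/
/-!
Basic definitions for mean-payoff games: games, infinite paths, positional
strategies, the valuations MP, supΣ^X and infΣ^X, values of vertices,
zones N, P, ZN, ZP (also relative to a sub-arena), reduced games,
potentials and potential reductions, traps.
-/

/-- A game: a sinkless directed graph with integer weights, whose vertices are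
partitioned into Min-vertices (`IsMin`) and Max-vertices (`¬ IsMin`). -/
structure MPGame (V : Type*) where
  E : V → V → Prop
  w : V → V → ℤ
  IsMin : V → Prop
  sinkless : ∀ v, ∃ v', E v v'

namespace MPGame

variable {V : Type*}

/-- An infinite path in a game. -/
structure Path (G : MPGame V) where
  vert : ℕ → V
  adj : ∀ i, G.E (vert i) (vert (i + 1))

/-- The sum of the weights of the first `k` edges of a path. -/
def Path.wsum {G : MPGame V} (π : G.Path) (k : ℕ) : ℤ :=
  ∑ i ∈ Finset.range k, G.w (π.vert i) (π.vert (i + 1))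

/-- The tail of a path (drop the first vertex). -/
def Path.tail {G : MPGame V} (π : G.Path) : G.Path :=
  ⟨fun i => π.vert (i + 1), fun i => π.adj (i + 1)⟩

/-- A positional strategy `σ : V → V` is legal if it always follows an edge. -/
def Legal (G : MPGame V) (σ : V → V) : Prop := ∀ v, G.E v (σ v)

/-- Consistency of a path with a positional Min-strategy. -/
def Path.ConsMin {G : MPGame V} (π : G.Path) (σ : V → V) : Prop :=
  ∀ i, G.IsMin (π.vert i) → π.vert (i + 1) = σ (π.vert i)

/-- Consistency of a path with a positional Max-strategy. -/
def Path.ConsMax {G : MPGame V} (π : G.Path) (τ : V → V) : Prop :=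
  ∀ i, ¬ G.IsMin (π.vert i) → π.vert (i + 1) = τ (π.vert i)

/-- The mean-payoff valuation `MP(π) = limsup_k (1/k) ∑_{i<k} w_i`. -/
noncomputable def MP {G : MPGame V} (π : G.Path) : EReal :=
  Filter.limsup (fun k => (((π.wsum k : ℝ) / (k : ℝ)) : EReal)) Filter.atTop

/-- `supΣ^X(π) = sup_{k ≤ n_X} ∑_{i<k} w_i`, where `n_X` is the first hitting
time of `X` (all `k` if `X` is never hit). -/
noncomputable def supSigma {G : MPGame V} (X : Set V) (π : G.Path) : EReal :=
  ⨆ k : {k : ℕ // ∀ i < k, π.vert i ∉ X}, ((π.wsum k.1 : ℝ) : EReal)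

/-- `infΣ^X(π) = inf_{k ≤ n_X} ∑_{i<k} w_i`. -/
noncomputable def infSigma {G : MPGame V} (X : Set V) (π : G.Path) : EReal :=
  ⨅ k : {k : ℕ // ∀ i < k, π.vert i ∉ X}, ((π.wsum k.1 : ℝ) : EReal)

/-- `inf_σ sup_{π ⊨ σ, π from v} val(π)`, over legal positional Min-strategies. -/
noncomputable def minVal (G : MPGame V) (val : G.Path → EReal) (v : V) : EReal :=
  ⨅ σ : {σ : V → V // G.Legal σ},
    ⨆ π : {π : G.Path // π.vert 0 = v ∧ π.ConsMin σ.1}, val π.1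

/-- `sup_τ inf_{π ⊨ τ, π from v} val(π)`, over legal positional Max-strategies. -/
noncomputable def maxVal (G : MPGame V) (val : G.Path → EReal) (v : V) : EReal :=
  ⨆ τ : {τ : V → V // G.Legal τ},
    ⨅ π : {π : G.Path // π.vert 0 = v ∧ π.ConsMax τ.1}, val π.1

/-- The MP-value of a vertex. -/
noncomputable def MPval (G : MPGame V) (v : V) : EReal := G.minVal MP v

/-- The `supΣ^X`-value of a vertex. -/
noncomputable def supSigmaVal (G : MPGame V) (X : Set V) (v : V) : EReal :=
  G.minVal (supSigma X) v

/-- The `infΣ^X`-value of a vertex. -/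
noncomputable def infSigmaVal (G : MPGame V) (X : Set V) (v : V) : EReal :=
  G.minVal (infSigma X) v

/-- `G` has no cycle of total weight zero: no path repeats a vertex with the
same partial sum of weights. -/
def NoZeroCycle (G : MPGame V) : Prop :=
  ∀ (π : G.Path) (i j : ℕ), i < j → π.vert i = π.vert j → π.wsum i ≠ π.wsum j

/-- The zone `N` of the subgame of `G` induced on `D`: vertices whose
immediately optimal edges (within `D`) have weight `< 0`. -/
def NsetOn (G : MPGame V) (D : Set V) : Set V :=
  {v | v ∈ D ∧ ((G.IsMin v ∧ ∃ v' ∈ D, G.E v v' ∧ G.w v v' < 0) ∨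
      (¬ G.IsMin v ∧ ∀ v' ∈ D, G.E v v' → G.w v v' < 0))}

/-- The zone `P` of the subgame of `G` induced on `D`. -/
def PsetOn (G : MPGame V) (D : Set V) : Set V :=
  {v | v ∈ D ∧ ((¬ G.IsMin v ∧ ∃ v' ∈ D, G.E v v' ∧ 0 < G.w v v') ∨
      (G.IsMin v ∧ ∀ v' ∈ D, G.E v v' → 0 < G.w v v'))}

/-- The zone `N` of `G`. -/
def Nset (G : MPGame V) : Set V := G.NsetOn Set.univ

/-- The zone `P` of `G`. -/
def Pset (G : MPGame V) : Set V := G.PsetOn Set.univ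

/-- The zone `ZN` of the subgame of `G` induced on `D`: vertices from which
Min can force that an edge of weight `< 0` is visited before any edge of
weight `> 0` (staying within `D`). -/
inductive ZNr (G : MPGame V) (D : Set V) : V → Prop
  | minNeg (v v' : V) : v ∈ D → G.IsMin v → v' ∈ D → G.E v v' → G.w v v' < 0 →
      ZNr G D v
  | minZero (v v' : V) : v ∈ D → G.IsMin v → v' ∈ D → G.E v v' → G.w v v' = 0 →
      ZNr G D v' → ZNr G D v
  | max (v : V) : v ∈ D → ¬ G.IsMin v →
      (∀ v' ∈ D, G.E v v' → G.w v v' ≤ 0) →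
      (∀ v', v' ∈ D → G.E v v' → G.w v v' = 0 → ZNr G D v') →
      ZNr G D v

/-- The zone `ZP` of the subgame of `G` induced on `D`. -/
inductive ZPr (G : MPGame V) (D : Set V) : V → Prop
  | maxPos (v v' : V) : v ∈ D → ¬ G.IsMin v → v' ∈ D → G.E v v' → 0 < G.w v v' →
      ZPr G D v
  | maxZero (v v' : V) : v ∈ D → ¬ G.IsMin v → v' ∈ D → G.E v v' → G.w v v' = 0 →
      ZPr G D v' → ZPr G D v
  | min (v : V) : v ∈ D → G.IsMin v →
      (∀ v' ∈ D, G.E v v' → 0 ≤ G.w v v') →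
      (∀ v', v' ∈ D → G.E v v' → G.w v v' = 0 → ZPr G D v') →
      ZPr G D v

/-- The zone `ZN` of `G`. -/
def ZN (G : MPGame V) : V → Prop := G.ZNr Set.univ

/-- The zone `ZP` of `G`. -/
def ZP (G : MPGame V) : V → Prop := G.ZPr Set.univ

/-- The subgame of `G` induced on `D` is reduced: from every vertex of `ZN`,
Min can force that the first edge visited has weight `≤ 0` and leads into
`ZN`, and symmetrically for `ZP` and Max. -/
def ReducedOn (G : MPGame V) (D : Set V) : Prop :=
  (∀ v, G.ZNr D v →
     (G.IsMin v → ∃ v' ∈ D, G.E v v' ∧ G.w v v' ≤ 0 ∧ G.ZNr D v') ∧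
     (¬ G.IsMin v → ∀ v' ∈ D, G.E v v' → G.w v v' ≤ 0 ∧ G.ZNr D v')) ∧
  (∀ v, G.ZPr D v →
     (¬ G.IsMin v → ∃ v' ∈ D, G.E v v' ∧ 0 ≤ G.w v v' ∧ G.ZPr D v') ∧
     (G.IsMin v → ∀ v' ∈ D, G.E v v' → 0 ≤ G.w v v' ∧ G.ZPr D v'))

/-- `G` is reduced. -/
def Reduced (G : MPGame V) : Prop := G.ReducedOn Set.univ

/-- The subgame of `G` induced on `D` is positively reduced: `ZN = ∅`. -/
def PosReducedOn (G : MPGame V) (D : Set V) : Prop := ∀ v, ¬ G.ZNr D v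

/-- `A` is a trap for Min: a sinkless subgraph from which Min cannot escape. -/
def TrapForMin (G : MPGame V) (A : Set V) : Prop :=
  (∀ v ∈ A, ∃ v' ∈ A, G.E v v') ∧
  ∀ v ∈ A, G.IsMin v → ∀ v', G.E v v' → v' ∈ A

/-- `A` is a trap for Max: a sinkless subgraph from which Max cannot escape. -/
def TrapForMax (G : MPGame V) (A : Set V) : Prop :=
  (∀ v ∈ A, ∃ v' ∈ A, G.E v v') ∧
  ∀ v ∈ A, ¬ G.IsMin v → ∀ v', G.E v v' → v' ∈ A

/-- The potential reduction of `G` by the potential `φ`. -/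
def pot (G : MPGame V) (φ : V → ℤ) : MPGame V where
  E := G.E
  w := fun v v' => G.w v v' + φ v' - φ v
  IsMin := G.IsMin
  sinkless := G.sinkless

end MPGame


lemma exists_descending_of_not_wf {α : Type*} {r : α → α → Prop}
    (h : ¬ WellFounded r) : ∃ f : ℕ → α, ∀ n, r (f (n+1)) (f n) := by
  have h1 : ∃ a, ¬ Acc r a := by
    by_contra hc; push_neg at hc; exact h ⟨hc⟩
  obtain ⟨a, ha⟩ := h1
  have key : ∀ x : {x // ¬ Acc r x}, ∃ y : {x // ¬ Acc r x}, r y.1 x.1 := by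
    rintro ⟨x, hx⟩
    by_contra hc
    push_neg at hc
    exact hx (Acc.intro x fun y hy => by_contra fun hny => hc ⟨y, hny⟩ hy)
  choose g hg using key
  refine ⟨fun n => (g^[n] ⟨a, ha⟩).1, fun n => ?_⟩
  simp only []
  rw [Function.iterate_succ_apply']
  exact hg _

open MPGame in
/-- Lemma 4: if the winning region of Max (vertices of
MP-value `> 0`) is empty and `φ` is a reducing potential for `H`, then some
vertex of `N_H` has minimal `φ`-value among all vertices of `H`. -/
theorem statement13 {V : Type*} [Fintype V] [Nonempty V] (H : MPGame V)
    (hz : H.NoZeroCycle)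
    (hwin : ∀ v, ¬ (0 < H.MPval v))
    (φ : V → ℤ) (hφ : (H.pot φ).Reduced) :
    ∃ v ∈ H.Nset, ∀ u : V, φ v ≤ φ u := by
  classical
  by_contra hcon
  push_neg at hcon
  set n := Fintype.card V with hn
  have hn0 : 0 < n := Fintype.card_pos
  obtain ⟨v0, -, hv0u⟩ := Finset.exists_min_image Finset.univ φ
    ⟨Classical.arbitrary V, Finset.mem_univ _⟩
  have hv0 : ∀ u, φ v0 ≤ φ u := fun u => hv0u u (Finset.mem_univ u)
  -- minimal vertices are not in N_H, extract structure
  have hstruct : ∀ v, (∀ u, φ v ≤ φ u) →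
      (H.IsMin v → ∀ v', H.E v v' → 0 ≤ H.w v v') ∧
      (¬ H.IsMin v → ∃ v', H.E v v' ∧ 0 ≤ H.w v v') := by
    intro v hv
    have hN : v ∉ H.Nset := by
      intro hNv
      obtain ⟨u, hu⟩ := hcon v hNv
      exact absurd (hv u) (not_le.mpr hu)
    constructor
    · intro hMin v' he
      by_contra hw
      exact hN ⟨Set.mem_univ v, Or.inl ⟨hMin, v', Set.mem_univ v', he, not_le.mp hw⟩⟩
    · intro hMax
      by_contra hc
      push_neg at hc
      exact hN ⟨Set.mem_univ v, Or.inr ⟨hMax, fun v' _ he => hc v' he⟩⟩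
  -- well-founded relation along zero-weight edges between minimal vertices
  set r : V → V → Prop :=
    fun v' v => (∀ u, φ v ≤ φ u) ∧ H.E v v' ∧ H.w v v' = 0 ∧ φ v' = φ v with hr
  have hwf : WellFounded r := by
    by_contra hW
    obtain ⟨f, hf⟩ := exists_descending_of_not_wf hW
    have hadj : ∀ m, H.E (f m) (f (m+1)) := fun m => (hf m).2.1
    set π : H.Path := ⟨f, hadj⟩ with hπ
    obtain ⟨a, b, hne, heq⟩ := Fintype.exists_ne_map_eq_of_card_lt
      (fun t : Fin (n+1) => f t) (by simp [hn])
    have hws : ∀ k, π.wsum k = 0 := by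
      intro k
      refine Finset.sum_eq_zero fun i _ => ?_
      exact (hf i).2.2.1
    have key : ∀ a b : ℕ, a < b → f a = f b → False := by
      intro a b hab hfeq
      exact hz π a b hab hfeq (by rw [hws, hws])
    rcases (Fin.val_ne_of_ne hne).lt_or_gt with h | h
    · exact key a b h heq
    · exact key b a h heq.symm
  -- every minimal vertex is in ZP of the reduced game
  have hZP : ∀ v, (∀ u, φ v ≤ φ u) → (H.pot φ).ZP v := by
    intro v
    induction v using WellFounded.induction hwf with
    | _ v IH =>
    intro hv
    by_cases hM : H.IsMin v
    · refine ZPr.min v (Set.mem_univ v) hM ?_ ?_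
      · intro v' _ he
        have hw := (hstruct v hv).1 hM v' he
        have h1 := hv v'
        show (0 : ℤ) ≤ H.w v v' + φ v' - φ v
        omega
      · intro v' _ he hw0
        have hw := (hstruct v hv).1 hM v' he
        have h1 := hv v'
        have hw0' : H.w v v' + φ v' - φ v = 0 := hw0
        have hww : H.w v v' = 0 ∧ φ v' = φ v := by omega
        have hv' : ∀ u, φ v' ≤ φ u := fun u => hww.2 ▸ hv u
        exact IH v' ⟨hv, he, hww.1, hww.2⟩ hv'
    · obtain ⟨v', he, hw⟩ := (hstruct v hv).2 hM
      have h1 := hv v'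
      have hwφ : (0 : ℤ) ≤ H.w v v' + φ v' - φ v := by omega
      rcases hwφ.lt_or_eq with h | h
      · exact ZPr.maxPos v v' (Set.mem_univ v) hM (Set.mem_univ v') he h
      · have hww : H.w v v' = 0 ∧ φ v' = φ v := by omega
        have hv' : ∀ u, φ v' ≤ φ u := fun u => hww.2 ▸ hv u
        exact ZPr.maxZero v v' (Set.mem_univ v) hM (Set.mem_univ v') he
          (by show H.w v v' + φ v' - φ v = 0; omega)
          (IH v' ⟨hv, he, hww.1, hww.2⟩ hv')
  -- a Max strategy keeping ZP and nonnegative reduced weight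
  have hτex : ∀ v, ∃ v', H.E v v' ∧ (¬ H.IsMin v → (H.pot φ).ZPr Set.univ v →
      0 ≤ (H.pot φ).w v v' ∧ (H.pot φ).ZPr Set.univ v') := by
    intro v
    by_cases h : ¬ H.IsMin v ∧ (H.pot φ).ZPr Set.univ v
    · obtain ⟨v', -, he, hw, hzp⟩ := (hφ.2 v h.2).1 h.1
      exact ⟨v', he, fun _ _ => ⟨hw, hzp⟩⟩
    · obtain ⟨v', he⟩ := H.sinkless v
      exact ⟨v', he, fun h1 h2 => absurd ⟨h1, h2⟩ h⟩
  choose τ hτE hτP using hτex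
  -- the bound on φ
  set C : ℤ := (Finset.univ.sup' Finset.univ_nonempty φ) - φ v0 with hC
  have hC0 : 0 ≤ C := by
    have := hv0 (Classical.arbitrary V)
    have h2 := Finset.le_sup' φ (Finset.mem_univ (Classical.arbitrary V))
    omega
  set K : ℕ := n * (2 * C.toNat + 1) with hK
  set c : ℝ := 1 / (2 * n) with hc
  have hcpos : (0 : ℝ) < c := by positivity
  -- main construction: for every Min strategy, a consistent path of large MP
  have key : ∀ σ : V → V, H.Legal σ →
      ∃ π : H.Path, π.vert 0 = v0 ∧ π.ConsMin σ ∧ ((c : EReal)) ≤ MP π := by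
    intro σ hσ
    set step : V → V := fun v => if H.IsMin v then σ v else τ v with hstep
    set f : ℕ → V := fun k => step^[k] v0 with hf
    have hf0 : f 0 = v0 := rfl
    have hfs : ∀ k, f (k+1) = step (f k) := by
      intro k
      simp only [hf]
      rw [Function.iterate_succ_apply']
    have hadj : ∀ m, H.E (f m) (f (m+1)) := by
      intro m
      rw [hfs]
      simp only [hstep]
      split_ifs with h
      · exact hσ (f m)
      · exact hτE (f m)
    set π : H.Path := ⟨f, hadj⟩ with hπ
    have hcons : π.ConsMin σ := by
      intro i hMin
      show f (i+1) = σ (f i)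
      rw [hfs]
      simp only [hstep]
      rw [if_pos hMin]
    -- invariant : stay in ZP
    have hZ : ∀ i, (H.pot φ).ZPr Set.univ (f i) := by
      intro i
      induction i with
      | zero => exact hZP v0 hv0
      | succ i ih =>
        rw [hfs]
        simp only [hstep]
        split_ifs with h
        · exact ((hφ.2 (f i) ih).2 h (σ (f i)) (Set.mem_univ _) (hσ (f i))).2
        · exact (hτP (f i) h ih).2
    have hWnn : ∀ i, 0 ≤ (H.pot φ).w (f i) (f (i+1)) := by
      intro i
      rw [hfs]
      simp only [hstep]
      split_ifs with h
      · exact ((hφ.2 (f i) (hZ i)).2 h (σ (f i)) (Set.mem_univ _) (hσ (f i))).1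
      · exact (hτP (f i) h (hZ i)).1
    -- the reduced partial sums
    set S : ℕ → ℤ := fun k => ∑ i ∈ Finset.range k, (H.pot φ).w (f i) (f (i+1)) with hS
    have hSsum : ∀ k, S k = π.wsum k + φ (f k) - φ v0 := by
      intro k
      induction k with
      | zero => simp [hS, Path.wsum, hf0]
      | succ k ih =>
        have h1 : S (k+1) = S k + (H.w (f k) (f (k+1)) + φ (f (k+1)) - φ (f k)) :=
          Finset.sum_range_succ _ k
        have h2 : π.wsum (k+1) = π.wsum k + H.w (f k) (f (k+1)) :=
          Finset.sum_range_succ _ k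
        omega
    have hSmono : ∀ i d, S i ≤ S (i + d) := by
      intro i d
      induction d with
      | zero => exact le_of_eq (by rw [Nat.add_zero])
      | succ d ih =>
        have h1 : S (i + d + 1) = S (i + d) + (H.pot φ).w (f (i+d)) (f (i+d+1)) :=
          Finset.sum_range_succ _ _
        have := hWnn (i + d)
        show S i ≤ S (i + d + 1)
        omega
    have hSmono' : ∀ i j, i ≤ j → S i ≤ S j := by
      intro i j hij
      obtain ⟨d, rfl⟩ := Nat.exists_eq_add_of_le hij
      exact hSmono i d
    -- windows of length n strictly increase
    have hwindow : ∀ i, S i + 1 ≤ S (i + n) := by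
      intro i
      obtain ⟨a, b, hne, heq⟩ := Fintype.exists_ne_map_eq_of_card_lt
        (fun t : Fin (n+1) => f (i + t)) (by simp [hn])
      have key2 : ∀ a b : Fin (n+1), a < b → f (i + a) = f (i + b) → S i + 1 ≤ S (i + n) := by
        intro a b hab hfeq
        have hab' : i + (a : ℕ) < i + (b : ℕ) := by
          have := Fin.lt_iff_val_lt_val.mp hab
          omega
        have hwne : π.wsum (i + a) ≠ π.wsum (i + b) := hz π _ _ hab' hfeq
        have e1 := hSsum (i + (a : ℕ))
        have e2 := hSsum (i + (b : ℕ))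
        have hle : S (i + (a : ℕ)) ≤ S (i + (b : ℕ)) := hSmono' _ _ (le_of_lt hab')
        have hSab : S (i + (a : ℕ)) + 1 ≤ S (i + (b : ℕ)) := by
          rcases hle.lt_or_eq with h | h
          · omega
          · exfalso
            apply hwne
            have hfφ : φ (f (i + (a : ℕ))) = φ (f (i + (b : ℕ))) := by rw [hfeq]
            omega
        have h1 : S i ≤ S (i + (a : ℕ)) := hSmono' _ _ (by omega)
        have h2 : S (i + (b : ℕ)) ≤ S (i + n) := by
          refine hSmono' _ _ ?_
          have := b.isLt
          omega
        omega
      rcases hne.lt_or_gt with h | h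
      · exact key2 a b h heq
      · exact key2 b a h heq.symm
    have hSm : ∀ m : ℕ, (m : ℤ) ≤ S (m * n) := by
      intro m
      induction m with
      | zero => simp [hS]
      | succ m ih =>
        have h1 := hwindow (m * n)
        have h2 : (m + 1) * n = m * n + n := by ring
        rw [h2]
        push_cast
        omega
    -- eventual lower bound on averages
    have hbound : ∀ k, K ≤ k → (c : EReal) ≤ (((π.wsum k : ℝ) / (k : ℝ) : ℝ) : EReal) := by
      intro k hk
      have hdm : n * (k / n) + k % n = k := Nat.div_add_mod k n
      have hmod : k % n < n := Nat.mod_lt k hn0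
      have hq1 : 2 * C.toNat + 1 ≤ k / n := by
        have h1 : K / n ≤ k / n := Nat.div_le_div_right hk
        rwa [hK, Nat.mul_div_cancel_left _ hn0] at h1
      have hSq : ((k / n : ℕ) : ℤ) ≤ S ((k / n) * n) := hSm (k / n)
      have hSk : S ((k / n) * n) ≤ S k := hSmono' _ _ (Nat.div_mul_le_self k n)
      have hwk : ((k / n : ℕ) : ℤ) - C ≤ π.wsum k := by
        have e := hSsum k
        have h2 := Finset.le_sup' φ (Finset.mem_univ (f k))
        omega
      have hCt : C ≤ (C.toNat : ℤ) := Int.self_le_toNat C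
      have hqC : 2 * C + 1 ≤ ((k / n : ℕ) : ℤ) := by
        have h3 : ((2 * C.toNat + 1 : ℕ) : ℤ) ≤ ((k / n : ℕ) : ℤ) := by exact_mod_cast hq1
        push_cast at h3
        omega
      have hnz : (0 : ℤ) ≤ (n : ℤ) := Int.ofNat_nonneg n
      have hdm' : (n : ℤ) * ((k / n : ℕ) : ℤ) + ((k % n : ℕ) : ℤ) = (k : ℤ) := by
        exact_mod_cast hdm
      have hm' : ((k % n : ℕ) : ℤ) < (n : ℤ) := by exact_mod_cast hmod
      have hm0 : (0 : ℤ) ≤ ((k % n : ℕ) : ℤ) := Int.ofNat_nonneg _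
      have e1 : (n : ℤ) * (2 * C + 1) ≤ (n : ℤ) * ((k / n : ℕ) : ℤ) :=
        mul_le_mul_of_nonneg_left hqC hnz
      have e2 : 2 * (n : ℤ) * (((k / n : ℕ) : ℤ) - C) ≤ 2 * (n : ℤ) * π.wsum k :=
        mul_le_mul_of_nonneg_left hwk (by positivity)
      have hmain : (k : ℤ) ≤ 2 * (n : ℤ) * π.wsum k := by nlinarith [e1, e2, hdm', hm', hC0]
      have hk0 : 0 < k := by
        have h4 : 0 < K := by rw [hK]; positivity
        omega
      rw [EReal.coe_le_coe_iff, hc]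
      rw [div_le_div_iff₀ (by positivity) (by exact_mod_cast hk0)]
      have h5 : (k : ℝ) ≤ 2 * (n : ℝ) * (π.wsum k : ℝ) := by exact_mod_cast hmain
      linarith
    refine ⟨π, hf0, hcons, ?_⟩
    have hfreq : ∃ᶠ k in Filter.atTop,
        (c : EReal) ≤ (((π.wsum k : ℝ) / (k : ℝ) : ℝ) : EReal) :=
      (Filter.eventually_atTop.mpr ⟨K, hbound⟩).frequently
    exact Filter.le_limsup_of_frequently_le' hfreq
  -- conclude : MPval v0 ≥ c > 0
  have hval : (c : EReal) ≤ H.MPval v0 := by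
    refine le_iInf fun σ => ?_
    obtain ⟨π, h0, hcons, hMP⟩ := key σ.1 σ.2
    exact le_iSup_of_le ⟨π, h0, hcons⟩ hMP
  exact hwin v0 (lt_of_lt_of_le (by exact_mod_cast hcpos) hval)
end

section
/- Let G be a game with no cycle of total weight zero over which the supΣ^N-value is finite at every vertex (where N = N_G), and let G' be the potential reduction of G by the potential φ(v) = supΣ^N-value(v). Then both N_{G'} and P_{G'} are contained in N. -/
/-!
Write `g` for the `supΣ^N`-value. A play from `v ∉ N` may start with any edge `v → v'`, so `g`
satisfies the optimality inequalities outside `N`: `w(vv') + g(v') ≤ g(v)` for every edge out of a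
Max-vertex and, `g` being integer-valued, for some edge out of every vertex. In `G'` these say that
outside `N` Max has no positive edge and every vertex has a nonpositive one, so `P_{G'} ⊆ N`.
Now let `v ∉ N` lie in `N_{G'}`: at a Max-vertex all edges, at a Min-vertex a chosen one, have
`w + g < g(v)`. Letting Min play that edge at `v` and descending edges elsewhere, telescoping
bounds every nonempty prefix sum by `g(v) - 1`, which forces `g(v) = 0`. But as `v ∉ N`, one of
those edges has weight `≥ 0`, so `w + g ≥ 0` along it: a contradiction.
-/

namespace MPGame

variable {V : Type*} {G : MPGame V}

def Path.cons (v : V) (π : G.Path) (h : G.E v (π.vert 0)) : G.Path where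
  vert := fun | 0 => v | i + 1 => π.vert i
  adj := fun | 0 => h | i + 1 => π.adj i

theorem Path.wsum_cons (v : V) (π : G.Path) (h : G.E v (π.vert 0)) (k : ℕ) :
    (π.cons v h).wsum (k + 1) = G.w v (π.vert 0) + π.wsum k := by
  simp only [Path.wsum, Finset.sum_range_succ']
  rw [add_comm]
  rfl

theorem Path.wsum_succ (π : G.Path) (k : ℕ) :
    π.wsum (k + 1) = π.wsum k + G.w (π.vert k) (π.vert (k + 1)) :=
  Finset.sum_range_succ _ _

theorem Path.wsum_succ' (π : G.Path) (k : ℕ) :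
    π.wsum (k + 1) = G.w (π.vert 0) (π.vert 1) + π.tail.wsum k := by
  simp only [Path.wsum, Path.tail, Finset.sum_range_succ']
  rw [add_comm]

def Path.ofStrategy (σ : V → V) (hσ : G.Legal σ) (v : V) : G.Path where
  vert i := σ^[i] v
  adj i := by
    rw [Function.iterate_succ_apply']
    exact hσ _

theorem Path.ofStrategy_consMin (σ : V → V) (hσ : G.Legal σ) (v : V) :
    (Path.ofStrategy σ hσ v).ConsMin σ :=
  fun i _ => Function.iterate_succ_apply' σ i v

theorem supSigma_nonneg (X : Set V) (π : G.Path) : 0 ≤ supSigma X π :=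
  le_iSup_of_le (ι := {k : ℕ // ∀ i < k, π.vert i ∉ X}) ⟨0, by simp⟩ (by simp [Path.wsum])

noncomputable def strategyVal (G : MPGame V) (val : G.Path → EReal) (σ : V → V) (v : V) :
    EReal :=
  ⨆ π : {π : G.Path // π.vert 0 = v ∧ π.ConsMin σ}, val π.1

theorem supSigmaVal_nonneg (X : Set V) (v : V) : 0 ≤ G.supSigmaVal X v :=
  le_iInf fun σ => le_iSup_of_le
    ⟨Path.ofStrategy σ.1 σ.2 v, rfl, Path.ofStrategy_consMin σ.1 σ.2 v⟩ (supSigma_nonneg X _)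

/-- Prepending the edge `v → v'` to a play from `v'` consistent with `σ` gives a play from `v`
consistent with `σ`, whose prefixes avoiding `X` are one edge longer. -/
theorem add_strategyVal_le {X : Set V} {σ : V → V} {v v' : V} (hv : v ∉ X) (hE : G.E v v')
    (hσ : G.IsMin v → σ v = v') :
    ((G.w v v' : ℝ) : EReal) + G.strategyVal (supSigma X) σ v' ≤
      G.strategyVal (supSigma X) σ v := by
  rw [add_comm, ← EReal.le_sub_iff_add_le (by simp) (by simp)]
  refine iSup_le fun ⟨π, hπ0, hπ⟩ => iSup_le fun ⟨k, hk⟩ => ?_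
  rw [EReal.le_sub_iff_add_le (by simp) (by simp)]
  subst hπ0
  have hcons : (π.cons v hE).ConsMin σ := fun
    | 0, hmin => ((hσ hmin).symm :)
    | i + 1, hmin => hπ i hmin
  have hk' : ∀ i < k + 1, (π.cons v hE).vert i ∉ X := fun
    | 0, _ => hv
    | i + 1, hi => hk i (by omega)
  refine le_iSup_of_le ⟨π.cons v hE, rfl, hcons⟩ (le_iSup_of_le (ι := {k // _}) ⟨k + 1, hk'⟩ ?_)
  rw [Path.wsum_cons]
  push_cast
  rw [add_comm]

theorem Legal.update [DecidableEq V] {σ : V → V} (hσ : G.Legal σ) {v v' : V} (hE : G.E v v') :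
    G.Legal (Function.update σ v v') := by
  intro u
  by_cases huv : u = v
  · subst huv
    simpa using hE
  · simpa [huv] using hσ u

def IsDescending (G : MPGame V) (X : Set V) (g : V → ℤ) (σ : V → V) : Prop :=
  ∀ u ∉ X, G.IsMin u → G.w u (σ u) + g (σ u) ≤ g u

theorem IsDescending.update [DecidableEq V] {σ : V → V} (hσ : G.IsDescending X g σ) {v v' : V}
    (hv' : G.w v v' + g v' ≤ g v) : G.IsDescending X g (Function.update σ v v') := by
  intro u hu hmin
  by_cases huv : u = v
  · subst huv
    simpa using hv'
  · simpa [huv] using hσ u hu hmin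

section IntegerValues

variable {X : Set V} {g : V → ℤ} (hg : ∀ v, G.supSigmaVal X v = ((g v : ℝ) : EReal))
include hg

theorem nonneg_of_supSigmaVal_eq (v : V) : 0 ≤ g v := by
  have := G.supSigmaVal_nonneg X v
  rw [hg] at this
  exact_mod_cast this

theorem add_le_of_not_isMin {v v' : V} (hv : v ∉ X) (hmax : ¬ G.IsMin v) (hE : G.E v v') :
    G.w v v' + g v' ≤ g v := by
  have : ((G.w v v' + g v' : ℤ) : ℝ) ≤ (G.supSigmaVal X v : EReal) := by
    refine le_iInf fun σ => ?_
    push_cast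
    rw [← hg]
    exact (add_le_add_right (iInf_le _ σ) _).trans (add_strategyVal_le hv hE (absurd · hmax))
  rw [hg] at this
  exact_mod_cast this

theorem exists_add_le {v : V} (hv : v ∉ X) :
    ∃ v', G.E v v' ∧ G.w v v' + g v' ≤ g v := by
  by_contra! hlt
  have : ((g v + 1 : ℤ) : ℝ) ≤ (G.supSigmaVal X v : EReal) := by
    refine le_iInf fun σ => ?_
    calc (((g v + 1 : ℤ) : ℝ) : EReal) ≤ ((G.w v (σ.1 v) + g (σ.1 v) : ℤ) : ℝ) := by
          exact_mod_cast hlt _ (σ.2 v)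
      _ = ((G.w v (σ.1 v) : ℝ) : EReal) + G.supSigmaVal X (σ.1 v) := by push_cast; rw [hg]
      _ ≤ _ := (add_le_add_right (iInf_le _ σ) _).trans
          (add_strategyVal_le hv (σ.2 v) fun _ => rfl)
  rw [hg] at this
  have : g v + 1 ≤ g v := by exact_mod_cast this
  omega

theorem exists_legal_isDescending : ∃ σ, G.Legal σ ∧ G.IsDescending X g σ := by
  classical
  have hstep (u : V) : ∃ u', G.E u u' ∧ (u ∉ X → G.w u u' + g u' ≤ g u) := by
    by_cases hu : u ∈ X
    · obtain ⟨u', hE⟩ := G.sinkless u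
      exact ⟨u', hE, absurd hu⟩
    · obtain ⟨u', hE, hle⟩ := exists_add_le hg hu
      exact ⟨u', hE, fun _ => hle⟩
  choose σ hE hle using hstep
  exact ⟨σ, hE, fun u hu _ => hle u hu⟩

theorem wsum_add_le {σ : V → V} (hσ : G.IsDescending X g σ) {π : G.Path} (hπ : π.ConsMin σ) :
    ∀ k, (∀ i < k, π.vert i ∉ X) → π.wsum k + g (π.vert k) ≤ g (π.vert 0)
  | 0, _ => by simp [Path.wsum]
  | k + 1, hk => by
    have hstep : G.w (π.vert k) (π.vert (k + 1)) + g (π.vert (k + 1)) ≤ g (π.vert k) := by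
      by_cases hmin : G.IsMin (π.vert k)
      · rw [hπ k hmin]
        exact hσ _ (hk k k.lt_succ_self) hmin
      · exact add_le_of_not_isMin hg (hk k k.lt_succ_self) hmin (π.adj k)
    have := wsum_add_le hσ hπ k fun i hi => hk i (by omega)
    rw [Path.wsum_succ]
    omega

/-- By telescoping after the first move, every nonempty prefix of a play from `v` consistent with
`σ` has weight `< g v`; the empty one has weight `0`, so `g v ≤ max 0 (g v - 1)`. -/
theorem nonpos_of_forall_add_lt {σ : V → V} (hσl : G.Legal σ) (hσ : G.IsDescending X g σ)
    {v : V} (hv : v ∉ X)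
    (hlt : ∀ v', G.E v v' → (G.IsMin v → v' = σ v) → G.w v v' + g v' < g v) : g v ≤ 0 := by
  have hbound : G.supSigmaVal X v ≤ ((max 0 (g v - 1) : ℤ) : ℝ) := by
    refine (iInf_le _ ⟨σ, hσl⟩).trans (iSup_le fun ⟨π, hπ0, hπ⟩ => iSup_le fun ⟨k, hk⟩ => ?_)
    suffices π.wsum k ≤ max 0 (g v - 1) by exact_mod_cast this
    subst hπ0
    cases k with
    | zero => simp [Path.wsum]
    | succ k =>
      have hfirst : G.w (π.vert 0) (π.vert 1) + g (π.vert 1) < g (π.vert 0) :=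
        hlt _ (π.adj 0) fun hmin => hπ 0 hmin
      have htail : π.tail.wsum k + g (π.vert (k + 1)) ≤ g (π.vert 1) :=
        wsum_add_le hg hσ (π := π.tail) (fun i => hπ (i + 1)) k fun i hi => hk (i + 1) (by omega)
      have := nonneg_of_supSigmaVal_eq hg (π.vert (k + 1))
      rw [Path.wsum_succ']
      omega
  rw [hg] at hbound
  have : g v ≤ max 0 (g v - 1) := by exact_mod_cast hbound
  omega

end IntegerValues

theorem notMem_Pset_pot {g : V → ℤ} (hg : ∀ v, G.supSigmaVal G.Nset v = ((g v : ℝ) : EReal))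
    {v : V} (hv : v ∉ G.Nset) : v ∉ (G.pot g).Pset := by
  rintro ⟨-, ⟨hmax, v', -, hE, hpos⟩ | ⟨hmin, hpos⟩⟩
  · have := add_le_of_not_isMin hg hv hmax hE
    simp only [pot] at hpos
    omega
  · obtain ⟨v', hE, hle⟩ := exists_add_le hg hv
    have := hpos v' trivial hE
    simp only [pot] at this
    omega

theorem notMem_Nset_pot {g : V → ℤ} (hg : ∀ v, G.supSigmaVal G.Nset v = ((g v : ℝ) : EReal))
    {v : V} (hv : v ∉ G.Nset) : v ∉ (G.pot g).Nset := by
  classical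
  obtain ⟨σ, hσl, hσ⟩ := exists_legal_isDescending hg
  rintro ⟨-, ⟨hmin, v', -, hE, hneg⟩ | ⟨hmax, hneg⟩⟩
  · simp only [pot] at hneg
    have hw : 0 ≤ G.w v v' := not_lt.1 fun h => hv ⟨trivial, Or.inl ⟨hmin, v', trivial, hE, h⟩⟩
    have := nonpos_of_forall_add_lt hg (σ := Function.update σ v v')
      (hσl.update hE) (hσ.update (by omega)) hv
      fun u _ hu => by simp only [hu hmin, Function.update_self]; omega
    have := nonneg_of_supSigmaVal_eq hg v'
    omega
  · simp only [pot] at hneg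
    obtain ⟨v₀, hE₀, hw₀⟩ : ∃ v₀, G.E v v₀ ∧ 0 ≤ G.w v v₀ := by
      by_contra! h
      exact hv ⟨trivial, Or.inr ⟨hmax, fun u _ hE => h u hE⟩⟩
    have := nonpos_of_forall_add_lt hg hσl hσ hv fun u hE _ => by
      have := hneg u trivial hE
      omega
    have := hneg v₀ trivial hE₀
    have := nonneg_of_supSigmaVal_eq hg v₀
    omega

end MPGame

open MPGame in
theorem statement14_general {V : Type*} (G : MPGame V)
    (g : V → ℤ) (hg : ∀ v, G.supSigmaVal G.Nset v = ((g v : ℝ) : EReal)) :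
    (G.pot g).Nset ⊆ G.Nset ∧ (G.pot g).Pset ⊆ G.Nset :=
  ⟨fun _ hv => by_contra fun hN => notMem_Nset_pot hg hN hv,
    fun _ hv => by_contra fun hN => notMem_Pset_pot hg hN hv⟩

open MPGame in
/-- Lemma 5: if the `supΣ^N`-value is finite (given by
`g : V → ℤ`) at every vertex of `G` and `G'` is the potential reduction of
`G` by `g`, then both `N_{G'}` and `P_{G'}` are contained in `N`. -/
theorem statement14 {V : Type*} [Fintype V] (G : MPGame V)
    (hz : G.NoZeroCycle)
    (g : V → ℤ) (hg : ∀ v, G.supSigmaVal G.Nset v = ((g v : ℝ) : EReal)) :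
    (G.pot g).Nset ⊆ G.Nset ∧ (G.pot g).Pset ⊆ G.Nset :=
  statement14_general G g hg
end

section
/- Let G be a game with no cycle of total weight zero, let F be a set of vertices containing N = N_G such that the supΣ^N-value is finite on F, let H be the subgame obtained by removing F from G (assumed to be a subgame), let φ_H be a reducing potential for H, and let H^+ = ZP_{φ_H} be nonempty. If there is no edge from H^+ ∩ V_Min to F, then every vertex of H^+ has supΣ^N-value equal to +∞ in G (in particular supΣ-value +∞ and MP-value > 0). -/
/-!
Since `φ_H` reduces `H`, Max can keep the play inside `H⁺` using only edges of nonnegative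
reduced weight, and Min cannot leave `H⁺` at all: against every Min-strategy there is a play
that stays in `H⁺ ⊆ V ∖ F ⊆ V ∖ N` and whose reduced partial sums never decrease. A potential
reduction preserves the weight of cycles, so such a play has no zero cycle either; by
pigeonhole its reduced partial sums therefore grow by at least one every `|V|` steps. The
original partial sums differ from the reduced ones by a bounded amount, so they grow at least
linearly, which makes `supΣ^N`, `supΣ` infinite and `MP` at least `1/|V|` on that play.
-/

namespace MPGame

variable {V : Type*} {G : MPGame V}

theorem ZPr.mem {D : Set V} {v : V} (h : G.ZPr D v) : v ∈ D := by
  cases h <;> assumption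

theorem exists_path_of_forall_exists_step {P : V → Prop} {R : V → V → Prop}
    (step : ∀ u, P u → ∃ u', P u' ∧ G.E u u' ∧ R u u') {v : V} (hv : P v) :
    ∃ π : G.Path, π.vert 0 = v ∧ (∀ i, P (π.vert i)) ∧ ∀ i, R (π.vert i) (π.vert (i + 1)) := by
  choose next hP hE hR using step
  let f : ℕ → {u // P u} := fun k => Nat.rec ⟨v, hv⟩ (fun _ p => ⟨next p.1 p.2, hP _ p.2⟩) k
  exact ⟨⟨fun i => (f i).1, fun i => hE _ (f i).2⟩, rfl, fun i => (f i).2, fun i => hR _ (f i).2⟩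

theorem ReducedOn.exists_path_ZPr {D : Set V} (hred : G.ReducedOn D)
    (hstay : ∀ u u', G.ZPr D u → G.IsMin u → G.E u u' → u' ∈ D)
    {σ : V → V} (hσ : G.Legal σ) {v : V} (hv : G.ZPr D v) :
    ∃ π : G.Path, π.vert 0 = v ∧ π.ConsMin σ ∧ (∀ i, π.vert i ∈ D) ∧
      ∀ i, 0 ≤ G.w (π.vert i) (π.vert (i + 1)) := by
  obtain ⟨π, h0, hZP, hstep⟩ := exists_path_of_forall_exists_step
    (P := G.ZPr D) (R := fun u u' => 0 ≤ G.w u u' ∧ (G.IsMin u → u' = σ u)) (fun u hu => by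
      by_cases hmin : G.IsMin u
      · obtain ⟨hw, hZ⟩ := (hred.2 u hu).2 hmin (σ u) (hstay u _ hu hmin (hσ u)) (hσ u)
        exact ⟨σ u, hZ, hσ u, hw, fun _ => rfl⟩
      · obtain ⟨u', -, hE, hw, hZ⟩ := (hred.2 u hu).1 hmin
        exact ⟨u', hZ, hE, hw, fun h => absurd h hmin⟩) hv
  exact ⟨π, h0, fun i => (hstep i).2, fun i => (hZP i).mem, fun i => (hstep i).1⟩

theorem Path.wsum_mono {π : G.Path} (hw : ∀ i, 0 ≤ G.w (π.vert i) (π.vert (i + 1))) :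
    Monotone π.wsum :=
  monotone_nat_of_le_succ fun k => by rw [π.wsum_succ]; linarith [hw k]

section NoZeroCycle

variable [Fintype V] (hz : G.NoZeroCycle) {π : G.Path}
  (hw : ∀ i, 0 ≤ G.w (π.vert i) (π.vert (i + 1)))
include hz hw

/-- Among the `|V| + 1` vertices visited from step `k` on, two coincide; the cycle between
them has nonzero, hence positive, weight. -/
theorem NoZeroCycle.wsum_add_one_le (k : ℕ) :
    π.wsum k + 1 ≤ π.wsum (k + Fintype.card V) := by
  have hmono := Path.wsum_mono hw
  have hcycle : ∀ i j, i < j → j ≤ Fintype.card V → π.vert (k + i) = π.vert (k + j) →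
      π.wsum k + 1 ≤ π.wsum (k + Fintype.card V) := fun i j hij hj heq => by
    have hne := hz π (k + i) (k + j) (by omega) heq
    have := hmono (show k + i ≤ k + j by omega)
    have := hmono (show k ≤ k + i by omega)
    have := hmono (show k + j ≤ k + Fintype.card V by omega)
    omega
  obtain ⟨a, b, hab, heq⟩ := Fintype.exists_ne_map_eq_of_card_lt
    (fun i : Fin (Fintype.card V + 1) => π.vert (k + i)) (by simp)
  rcases lt_or_gt_of_ne (Fin.val_ne_of_ne hab) with h | h
  · exact hcycle a b h (by omega) heq
  · exact hcycle b a h (by omega) heq.symm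

theorem NoZeroCycle.div_card_le_wsum (k : ℕ) : ((k / Fintype.card V : ℕ) : ℤ) ≤ π.wsum k := by
  have hmul : ∀ m : ℕ, (m : ℤ) ≤ π.wsum (m * Fintype.card V) := fun m => by
    induction m with
    | zero => simp [Path.wsum]
    | succ m ih =>
      rw [Nat.succ_mul]
      have := hz.wsum_add_one_le hw (m * Fintype.card V)
      push_cast
      omega
  exact (hmul _).trans (Path.wsum_mono hw (Nat.div_mul_le_self k _))

theorem NoZeroCycle.linear_le_wsum (k : ℕ) :
    (Fintype.card V : ℝ)⁻¹ * k - 1 ≤ π.wsum k := by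
  have : Nonempty V := ⟨π.vert 0⟩
  have hcard : (0 : ℝ) < Fintype.card V := by exact_mod_cast Fintype.card_pos
  have hdiv : (k : ℝ) < ((k / Fintype.card V : ℕ) + 1) * Fintype.card V := by
    have : k < (k / Fintype.card V + 1) * Fintype.card V := by
      rw [Nat.succ_mul]; exact Nat.lt_div_mul_add Fintype.card_pos
    exact_mod_cast this
  have hle : ((k / Fintype.card V : ℕ) : ℝ) ≤ π.wsum k := by
    have := Int.cast_le (R := ℝ) |>.2 (hz.div_card_le_wsum hw k)
    rwa [Int.cast_natCast] at this
  rw [inv_mul_eq_div, sub_le_iff_le_add, div_le_iff₀ hcard]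
  nlinarith

end NoZeroCycle

def Path.unpot {φ : V → ℤ} (π : (G.pot φ).Path) : G.Path := ⟨π.vert, π.adj⟩

theorem Path.wsum_pot {φ : V → ℤ} (π : (G.pot φ).Path) (k : ℕ) :
    π.wsum k = π.unpot.wsum k + φ (π.vert k) - φ (π.vert 0) := by
  simp only [Path.wsum, Path.unpot, pot, add_sub_assoc, Finset.sum_add_distrib,
    Finset.sum_range_sub (fun i => φ (π.vert i))]

theorem NoZeroCycle.pot (hz : G.NoZeroCycle) (φ : V → ℤ) : (G.pot φ).NoZeroCycle :=
  fun π i j hij heq hsum =>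
    hz π.unpot i j hij heq (by rw [π.wsum_pot, π.wsum_pot, heq] at hsum; linarith)

theorem NoZeroCycle.exists_linear_le_wsum_unpot [Fintype V] (hz : G.NoZeroCycle) {φ : V → ℤ}
    {π : (G.pot φ).Path} (hw : ∀ i, 0 ≤ (G.pot φ).w (π.vert i) (π.vert (i + 1))) :
    ∃ C : ℝ, ∀ k : ℕ, (Fintype.card V : ℝ)⁻¹ * k - C ≤ π.unpot.wsum k := by
  have : Nonempty V := ⟨π.vert 0⟩
  obtain ⟨u, hu⟩ := Finite.exists_max fun u => |φ u|
  refine ⟨1 + 2 * |φ u|, fun k => ?_⟩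
  have hlin := (hz.pot φ).linear_le_wsum hw k
  have hφ : φ (π.vert k) - φ (π.vert 0) ≤ 2 * |φ u| := by
    linarith [(abs_le.1 (hu (π.vert k))).2, (abs_le.1 (hu (π.vert 0))).1]
  have hφ' : ((φ (π.vert k) - φ (π.vert 0) : ℤ) : ℝ) ≤ ((2 * |φ u| : ℤ) : ℝ) := by
    exact_mod_cast hφ
  rw [π.wsum_pot] at hlin
  push_cast at hlin hφ' ⊢
  linarith

theorem Path.supSigma_eq_top {π : G.Path} {X : Set V} (hX : ∀ i, π.vert i ∉ X) {c C : ℝ}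
    (hc : 0 < c) (hlin : ∀ k : ℕ, c * k - C ≤ π.wsum k) : supSigma X π = ⊤ := by
  have htends : Filter.Tendsto (fun k : ℕ => (π.wsum k : ℝ)) Filter.atTop Filter.atTop :=
    Filter.tendsto_atTop_mono hlin <| Filter.tendsto_atTop_add_const_right _ _ <|
      tendsto_natCast_atTop_atTop.const_mul_atTop hc
  refine iSup_eq_top.2 fun b hb => ?_
  induction b with
  | bot => exact ⟨⟨0, fun i hi => absurd hi (Nat.not_lt_zero i)⟩, EReal.bot_lt_coe _⟩
  | coe r =>
    obtain ⟨k, hk⟩ := (htends.eventually_gt_atTop r).exists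
    exact ⟨⟨k, fun i _ => hX i⟩, EReal.coe_lt_coe_iff.2 hk⟩
  | top => exact absurd rfl hb.ne

theorem Path.le_MP {π : G.Path} {c C : ℝ} (hlin : ∀ k : ℕ, c * k - C ≤ π.wsum k) :
    (c : EReal) ≤ MP π := by
  have htends : Filter.Tendsto (fun k : ℕ => (((c * k - C) / k : ℝ) : EReal))
      Filter.atTop (nhds (c : EReal)) := by
    refine (continuous_coe_real_ereal.tendsto c).comp ?_
    have : Filter.Tendsto (fun k : ℕ => c - C / k) Filter.atTop (nhds c) := by
      simpa using tendsto_const_nhds.sub (tendsto_const_div_atTop_nhds_zero_nat C)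
    refine this.congr' ((Filter.eventually_ne_atTop 0).mono fun k hk => ?_)
    field_simp
  rw [← htends.limsup_eq]
  refine Filter.limsup_le_limsup (Filter.Eventually.of_forall fun k => ?_)
  rcases k.eq_zero_or_pos with rfl | hk
  · simp
  · exact EReal.coe_le_coe_iff.2 (div_le_div_of_nonneg_right (hlin k) k.cast_nonneg)

theorem le_minVal {val : G.Path → EReal} {v : V} {c : EReal}
    (h : ∀ σ, G.Legal σ → ∃ π : G.Path, π.vert 0 = v ∧ π.ConsMin σ ∧ c ≤ val π) :
    c ≤ G.minVal val v :=
  le_iInf fun σ =>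
    let ⟨π, h0, hcons, hle⟩ := h σ.1 σ.2
    hle.trans (le_iSup (fun π : {π : G.Path // π.vert 0 = v ∧ π.ConsMin σ.1} => val π.1)
      ⟨π, h0, hcons⟩)

end MPGame

open MPGame in
theorem statement17_general {V : Type*} [Fintype V] (G : MPGame V)
    (hz : G.NoZeroCycle)
    (F : Set V) (hNF : G.Nset ⊆ F)
    (φH : V → ℤ) (hred : (G.pot φH).ReducedOn Fᶜ)
    (hnoesc : ∀ u u', (G.pot φH).ZPr Fᶜ u → G.IsMin u → G.E u u' → u' ∉ F) :
    ∀ v, (G.pot φH).ZPr Fᶜ v →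
      G.supSigmaVal G.Nset v = ⊤ ∧ G.supSigmaVal ∅ v = ⊤ ∧ 0 < G.MPval v := by
  intro v hv
  have hplay : ∀ σ, G.Legal σ → ∃ π : G.Path, π.vert 0 = v ∧ π.ConsMin σ ∧
      (∀ i, π.vert i ∉ F) ∧ ∃ C : ℝ, ∀ k : ℕ, (Fintype.card V : ℝ)⁻¹ * k - C ≤ π.wsum k := by
    intro σ hσ
    obtain ⟨π, h0, hcons, hF, hw⟩ := hred.exists_path_ZPr hnoesc hσ hv
    exact ⟨π.unpot, h0, hcons, hF, hz.exists_linear_le_wsum_unpot hw⟩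
  have hcard : (0 : ℝ) < (Fintype.card V : ℝ)⁻¹ := by
    have : Nonempty V := ⟨v⟩
    positivity
  have htop : ∀ X ⊆ F, G.supSigmaVal X v = ⊤ := fun X hX =>
    top_le_iff.1 <| le_minVal fun σ hσ => by
      obtain ⟨π, h0, hcons, hF, C, hlin⟩ := hplay σ hσ
      exact ⟨π, h0, hcons, (π.supSigma_eq_top (fun i hi => hF i (hX hi)) hcard hlin).ge⟩
  refine ⟨htop _ hNF, htop ∅ (Set.empty_subset F), ?_⟩
  refine (EReal.coe_pos.2 hcard).trans_le (le_minVal fun σ hσ => ?_)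
  obtain ⟨π, h0, hcons, -, C, hlin⟩ := hplay σ hσ
  exact ⟨π, h0, hcons, π.le_MP hlin⟩

open MPGame in
/-- with `F ⊇ N`, `g` the finite `supΣ^N`-values on `F`,
`H = G ∖ F` a subgame with reducing potential `φ_H` and `H⁺ = ZP_{φ_H}`
nonempty, if there is no edge from `H⁺ ∩ V_Min` to `F` then every vertex of
`H⁺` has `supΣ^N`-value `+∞` in `G` (in particular `supΣ`-value `+∞` and
MP-value `> 0`). -/
theorem statement17 {V : Type*} [Fintype V] (G : MPGame V)
    (hz : G.NoZeroCycle)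
    (F : Set V) (hNF : G.Nset ⊆ F)
    (g : V → ℤ) (hg : ∀ u ∈ F, G.supSigmaVal G.Nset u = ((g u : ℝ) : EReal))
    (hsub : ∀ u ∈ Fᶜ, ∃ u' ∈ Fᶜ, G.E u u')
    (φH : V → ℤ) (hred : (G.pot φH).ReducedOn Fᶜ)
    (hne : ∃ u, (G.pot φH).ZPr Fᶜ u)
    (hnoesc : ∀ u u', (G.pot φH).ZPr Fᶜ u → G.IsMin u → G.E u u' → u' ∉ F) :
    ∀ v, (G.pot φH).ZPr Fᶜ v →
      G.supSigmaVal G.Nset v = ⊤ ∧ G.supSigmaVal ∅ v = ⊤ ∧ 0 < G.MPval v :=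
  statement17_general G hz F hNF φH hred hnoesc
end

section
/- Let G be a game with no cycle of total weight zero in which some vertex has MP-value < 0. Then there exists a vertex v ∈ N whose supΣ-value is 0, i.e. a vertex at which Min can ensure that the first edge visited has weight < 0 and from which her supΣ-value is 0 (the profile of partial sums never exceeds 0). -/
namespace S18
open MPGame Filter Finset

variable {V : Type*} {G : MPGame V}

lemma wsum_zero (π : G.Path) : π.wsum 0 = 0 := rfl

lemma wsum_succ (π : G.Path) (k : ℕ) :
    π.wsum (k + 1) = π.wsum k + G.w (π.vert k) (π.vert (k + 1)) :=
  Finset.sum_range_succ _ _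

lemma wsum_add (π : G.Path) (a b : ℕ) :
    π.wsum (a + b)
      = π.wsum a + ∑ t ∈ Finset.range b, G.w (π.vert (a + t)) (π.vert (a + t + 1)) :=
  Finset.sum_range_add _ a b

/-- Drop the first `n` vertices of a path. -/
def shiftN (π : G.Path) (n : ℕ) : G.Path :=
  ⟨fun m => π.vert (n + m), fun i => π.adj (n + i)⟩

@[simp] lemma shiftN_vert (π : G.Path) (n m : ℕ) : (shiftN π n).vert m = π.vert (n + m) := rfl

lemma shiftN_wsum (π : G.Path) (n k : ℕ) :
    (shiftN π n).wsum k = π.wsum (n + k) - π.wsum n := by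
  have h := wsum_add π n k
  have h2 : (shiftN π n).wsum k
      = ∑ t ∈ Finset.range k, G.w (π.vert (n + t)) (π.vert (n + t + 1)) := rfl
  omega

lemma shiftN_cons {σ : V → V} {π : G.Path} (h : π.ConsMin σ) (n : ℕ) :
    (shiftN π n).ConsMin σ := fun i hi => h (n + i) hi

/-- Prepend a vertex to a path. -/
def prepend (u : V) (π : G.Path) (h : G.E u (π.vert 0)) : G.Path where
  vert m := match m with
    | 0 => u
    | (m + 1) => π.vert m
  adj i := match i with
    | 0 => h
    | (i + 1) => π.adj i

@[simp] lemma prepend_vert_zero (u : V) (π : G.Path) (h : G.E u (π.vert 0)) :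
    (prepend u π h).vert 0 = u := rfl

@[simp] lemma prepend_vert_succ (u : V) (π : G.Path) (h : G.E u (π.vert 0)) (m : ℕ) :
    (prepend u π h).vert (m + 1) = π.vert m := rfl

lemma prepend_wsum (u : V) (π : G.Path) (h : G.E u (π.vert 0)) (k : ℕ) :
    (prepend u π h).wsum (k + 1) = G.w u (π.vert 0) + π.wsum k := by
  show (∑ i ∈ Finset.range (k+1),
      G.w ((prepend u π h).vert i) ((prepend u π h).vert (i+1))) = _
  rw [Finset.sum_range_succ']
  have : ∀ i, G.w ((prepend u π h).vert (i+1)) ((prepend u π h).vert (i+1+1))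
      = G.w (π.vert i) (π.vert (i+1)) := fun i => rfl
  simp only [this, prepend_vert_zero, prepend_vert_succ]
  rw [add_comm]
  rfl

lemma prepend_cons {σ : V → V} (u : V) (π : G.Path) (h : G.E u (π.vert 0))
    (hπ : π.ConsMin σ) (hu : G.IsMin u → π.vert 0 = σ u) :
    (prepend u π h).ConsMin σ := fun i => match i with
  | 0 => fun hm => hu hm
  | (i + 1) => fun hm => hπ i hm

end S18
namespace S18
open MPGame Filter Finset

variable {V : Type*} {G : MPGame V}

/-- Follow `π` for `n` steps, then continue along `ρ`. -/
def splice (π : G.Path) (n : ℕ) (ρ : G.Path) (h : ρ.vert 0 = π.vert n) : G.Path where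
  vert m := if m < n then π.vert m else ρ.vert (m - n)
  adj i := by
    by_cases h1 : i + 1 < n
    · have h0 : i < n := by omega
      simpa [h0, h1] using π.adj i
    · by_cases h0 : i < n
      · have he : i + 1 = n := by omega
        simp only [if_pos h0, if_neg h1]
        rw [show i + 1 - n = 0 from by omega, h, ← he]
        exact π.adj i
      · simp only [if_neg h0, if_neg h1]
        rw [show i + 1 - n = (i - n) + 1 from by omega]
        exact ρ.adj (i - n)

lemma splice_vert_of_le {π : G.Path} {n : ℕ} {ρ : G.Path} {h : ρ.vert 0 = π.vert n}
    {m : ℕ} (hm : m ≤ n) : (splice π n ρ h).vert m = π.vert m := by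
  by_cases h' : m < n
  · simp [splice, h']
  · have : m = n := by omega
    subst this
    simp [splice, h]

lemma splice_vert_add {π : G.Path} {n : ℕ} {ρ : G.Path} {h : ρ.vert 0 = π.vert n}
    (m : ℕ) : (splice π n ρ h).vert (n + m) = ρ.vert m := by
  simp only [splice]
  rw [if_neg (by omega), show n + m - n = m from by omega]

lemma splice_cons {σ : V → V} {π : G.Path} {n : ℕ} {ρ : G.Path} {h : ρ.vert 0 = π.vert n}
    (hπ : π.ConsMin σ) (hρ : ρ.ConsMin σ) : (splice π n ρ h).ConsMin σ := by
  intro i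
  by_cases h0 : i < n
  · have hv : (splice π n ρ h).vert i = π.vert i := splice_vert_of_le h0.le
    have hv1 : (splice π n ρ h).vert (i + 1) = π.vert (i + 1) := splice_vert_of_le (by omega)
    rw [hv, hv1]
    exact hπ i
  · obtain ⟨t, rfl⟩ := Nat.exists_eq_add_of_le (Nat.le_of_not_lt h0)
    have hv : (splice π n ρ h).vert (n + t) = ρ.vert t := splice_vert_add t
    have hv1 : (splice π n ρ h).vert (n + t + 1) = ρ.vert (t + 1) := by
      rw [show n + t + 1 = n + (t + 1) from rfl]
      exact splice_vert_add (t + 1)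
    rw [hv, hv1]
    exact hρ t

lemma splice_wsum_of_le {π : G.Path} {n : ℕ} {ρ : G.Path} {h : ρ.vert 0 = π.vert n}
    {m : ℕ} (hm : m ≤ n) : (splice π n ρ h).wsum m = π.wsum m := by
  apply Finset.sum_congr rfl
  intro i hi
  have hi' := Finset.mem_range.mp hi
  rw [splice_vert_of_le (by omega : i ≤ n), splice_vert_of_le (by omega : i + 1 ≤ n)]

lemma splice_wsum_add {π : G.Path} {n : ℕ} {ρ : G.Path} {h : ρ.vert 0 = π.vert n}
    (m : ℕ) : (splice π n ρ h).wsum (n + m) = π.wsum n + ρ.wsum m := by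
  rw [wsum_add, splice_wsum_of_le le_rfl]
  congr 1
  apply Finset.sum_congr rfl
  intro t _
  rw [show n + t + 1 = n + (t + 1) from rfl, splice_vert_add, splice_vert_add]

/-- The path looping forever around the cycle `π.vert i, …, π.vert (i+ℓ) = π.vert i`. -/
def loopPath (π : G.Path) (i ℓ : ℕ) (hℓ : 0 < ℓ) (hc : π.vert (i + ℓ) = π.vert i) : G.Path where
  vert m := π.vert (i + m % ℓ)
  adj m := by
    show G.E (π.vert (i + m % ℓ)) (π.vert (i + (m + 1) % ℓ))
    have hr : m % ℓ < ℓ := Nat.mod_lt _ hℓ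
    have hmod : (m + 1) % ℓ = (m % ℓ + 1) % ℓ := by
      conv_lhs => rw [show m + 1 = ℓ * (m / ℓ) + (m % ℓ + 1) from by
        have := Nat.div_add_mod m ℓ; omega]
      rw [Nat.mul_add_mod]
    by_cases h1 : m % ℓ + 1 < ℓ
    · rw [hmod, Nat.mod_eq_of_lt h1]
      exact π.adj (i + m % ℓ)
    · have h2 : m % ℓ + 1 = ℓ := by omega
      rw [hmod, h2, Nat.mod_self]
      have h3 := π.adj (i + m % ℓ)
      rw [show i + m % ℓ + 1 = i + ℓ from by omega, hc] at h3
      simpa using h3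

lemma loopPath_vert (π : G.Path) (i ℓ : ℕ) (hℓ : 0 < ℓ) (hc : π.vert (i + ℓ) = π.vert i)
    (m : ℕ) : (loopPath π i ℓ hℓ hc).vert m = π.vert (i + m % ℓ) := rfl

lemma loopPath_cons {σ : V → V} {π : G.Path} {i ℓ : ℕ} {hℓ : 0 < ℓ}
    {hc : π.vert (i + ℓ) = π.vert i} (hπ : π.ConsMin σ) :
    (loopPath π i ℓ hℓ hc).ConsMin σ := by
  intro m hm
  have hr : m % ℓ < ℓ := Nat.mod_lt _ hℓ
  have hmod : (m + 1) % ℓ = (m % ℓ + 1) % ℓ := by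
    conv_lhs => rw [show m + 1 = ℓ * (m / ℓ) + (m % ℓ + 1) from by
      have := Nat.div_add_mod m ℓ; omega]
    rw [Nat.mul_add_mod]
  have hstep := hπ (i + m % ℓ) hm
  show (loopPath π i ℓ hℓ hc).vert (m+1) = σ (π.vert (i + m % ℓ))
  rw [loopPath_vert, hmod]
  by_cases h1 : m % ℓ + 1 < ℓ
  · rw [Nat.mod_eq_of_lt h1]
    exact hstep
  · have h2 : m % ℓ + 1 = ℓ := by omega
    rw [h2, Nat.mod_self]
    rw [show i + m % ℓ + 1 = i + ℓ from by omega, hc] at hstep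
    simpa using hstep

lemma loopPath_wsum (π : G.Path) (i ℓ : ℕ) (hℓ : 0 < ℓ) (hc : π.vert (i + ℓ) = π.vert i)
    (m : ℕ) :
    (loopPath π i ℓ hℓ hc).wsum (m * ℓ) = m * (π.wsum (i + ℓ) - π.wsum i) := by
  induction m with
  | zero => simp [wsum_zero]
  | succ m ih =>
    rw [show (m + 1) * ℓ = m * ℓ + ℓ from by ring, wsum_add, ih]
    have hblock : ∑ t ∈ Finset.range ℓ,
        G.w ((loopPath π i ℓ hℓ hc).vert (m * ℓ + t)) ((loopPath π i ℓ hℓ hc).vert (m * ℓ + t + 1))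
        = π.wsum (i + ℓ) - π.wsum i := by
      have h2 := wsum_add π i ℓ
      rw [show π.wsum (i + ℓ) - π.wsum i
          = ∑ t ∈ Finset.range ℓ, G.w (π.vert (i + t)) (π.vert (i + t + 1)) from by omega]
      apply Finset.sum_congr rfl
      intro t ht
      have ht' := Finset.mem_range.mp ht
      have e1 : (loopPath π i ℓ hℓ hc).vert (m * ℓ + t) = π.vert (i + t) := by
        rw [loopPath_vert, Nat.mul_add_mod', Nat.mod_eq_of_lt ht']
      have e2 : (loopPath π i ℓ hℓ hc).vert (m * ℓ + t + 1) = π.vert (i + t + 1) := by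
        rw [loopPath_vert, show m * ℓ + t + 1 = m * ℓ + (t + 1) from rfl, Nat.mul_add_mod']
        by_cases h1 : t + 1 < ℓ
        · rw [Nat.mod_eq_of_lt h1, show i + (t + 1) = i + t + 1 from rfl]
        · have h2' : (t + 1) % ℓ = 0 := by rw [show t + 1 = ℓ from by omega]; exact Nat.mod_self ℓ
          rw [h2', show i + t + 1 = i + ℓ from by omega, hc, show i + 0 = i from rfl]
      rw [e1, e2]
    rw [hblock]
    push_cast
    ring

/-- The path from `u` following the positional strategy `τ`. -/
def follow (τ : V → V) (hτ : G.Legal τ) (u : V) : G.Path :=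
  ⟨fun m => τ^[m] u, fun i => by
    show G.E (τ^[i] u) (τ^[i + 1] u)
    rw [Function.iterate_succ_apply']
    exact hτ _⟩

@[simp] lemma follow_vert_zero (τ : V → V) (hτ : G.Legal τ) (u : V) :
    (follow τ hτ u).vert 0 = u := rfl

lemma follow_cons {σ τ : V → V} (hτ : G.Legal τ) (hs : ∀ x, G.IsMin x → τ x = σ x) (u : V) :
    (follow τ hτ u).ConsMin σ := by
  intro i hm
  show τ^[i + 1] u = σ (τ^[i] u)
  rw [Function.iterate_succ_apply']
  exact hs _ hm

/-- A legal strategy agreeing with the Min-strategy `σ` on Min vertices. -/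
noncomputable def comb (G : MPGame V) (σ : V → V) : V → V := fun x =>
  haveI := Classical.propDecidable (G.IsMin x)
  if G.IsMin x then σ x else (G.sinkless x).choose

lemma comb_legal {σ : V → V} (hσ : G.Legal σ) : G.Legal (comb G σ) := by
  intro x
  unfold comb
  split
  · exact hσ x
  · exact (G.sinkless x).choose_spec

lemma comb_min {σ : V → V} {x : V} (hm : G.IsMin x) : comb G σ x = σ x := by
  simp [comb, hm]

end S18
namespace S18
open MPGame Filter Finset

variable {V : Type*} {G : MPGame V}

/-- If the mean payoff of a path is negative, its partial sums are eventually
below any bound. -/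
lemma eventually_wsum_lt (π : G.Path) (hMP : MP π < 0) (M : ℤ) :
    ∃ N : ℕ, ∀ k ≥ N, π.wsum k < M := by
  obtain ⟨c, h1, h2⟩ := exists_between hMP
  have hcb : c ≠ ⊥ := (bot_le.trans_lt h1).ne'
  have hct : c ≠ ⊤ := (h2.trans_le le_top).ne
  set r := c.toReal with hrdef
  have hcr : c = (r : EReal) := (EReal.coe_toReal hct hcb).symm
  have hrneg : r < 0 := by
    have h2' := h2
    rw [hcr] at h2'
    exact_mod_cast h2'
  have h3 : ∀ᶠ k in atTop, (((π.wsum k : ℝ) / (k : ℝ) : ℝ) : EReal) < c :=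
    Filter.eventually_lt_of_limsup_lt h1
  obtain ⟨N1, hN1⟩ := Filter.eventually_atTop.mp h3
  obtain ⟨N2, hN2⟩ := exists_nat_gt ((M : ℝ) / r)
  refine ⟨max N1 (max 1 N2), fun k hk => ?_⟩
  have hk1 : 1 ≤ k := le_trans (le_trans (le_max_left 1 N2) (le_max_right N1 _)) hk
  have hk2 : N2 ≤ k := le_trans (le_trans (le_max_right 1 N2) (le_max_right N1 _)) hk
  have hkr : (0 : ℝ) < (k : ℝ) := by exact_mod_cast Nat.lt_of_lt_of_le Nat.zero_lt_one hk1
  have h4 : ((π.wsum k : ℝ) / (k : ℝ)) < r := by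
    have h5 := hN1 k (le_trans (le_max_left N1 _) hk)
    rw [hcr] at h5
    exact_mod_cast h5
  rw [div_lt_iff₀ hkr] at h4
  have h6 : r * (k : ℝ) ≤ r * (N2 : ℝ) :=
    mul_le_mul_of_nonpos_left (by exact_mod_cast hk2) hrneg.le
  have h7 : (N2 : ℝ) * r < (M : ℝ) := (div_lt_iff_of_neg hrneg).mp hN2
  have h8 : ((π.wsum k : ℤ) : ℝ) < ((M : ℤ) : ℝ) := by
    push_cast
    push_cast at h4 h6 h7
    nlinarith
  exact_mod_cast h8

/-- In the one-player game of a Min strategy that guarantees unboundedly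
negative partial sums from `v`, every cycle on a consistent path is negative. -/
lemma cycle_neg (σ : V → V) (v : V)
    (hsm : ∀ π : G.Path, π.vert 0 = v → π.ConsMin σ → ∀ M : ℤ, ∃ N, ∀ k ≥ N, π.wsum k < M)
    (π : G.Path) (hv : π.vert 0 = v) (hcons : π.ConsMin σ)
    (i j : ℕ) (hij : i < j) (he : π.vert j = π.vert i) :
    π.wsum j < π.wsum i := by
  set ℓ := j - i with hℓdef
  have hℓ : 0 < ℓ := by omega
  have hc : π.vert (i + ℓ) = π.vert i := by rw [show i + ℓ = j from by omega]; exact he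
  set ρ := loopPath π i ℓ hℓ hc with hρdef
  have hρ0 : ρ.vert 0 = π.vert i := by
    rw [hρdef, loopPath_vert, Nat.zero_mod, Nat.add_zero]
  set lam := splice π i ρ hρ0 with hlamdef
  have hlam0 : lam.vert 0 = v := by
    rw [hlamdef, splice_vert_of_le (Nat.zero_le i)]; exact hv
  have hlamc : lam.ConsMin σ := splice_cons hcons (loopPath_cons hcons)
  obtain ⟨N, hN⟩ := hsm lam hlam0 hlamc (π.wsum i)
  by_contra hcon
  push_neg at hcon
  have key : lam.wsum (i + N * ℓ) = π.wsum i + (N : ℤ) * (π.wsum (i + ℓ) - π.wsum i) := by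
    rw [hlamdef, splice_wsum_add, hρdef, loopPath_wsum]
  have hNk : i + N * ℓ ≥ N := by
    have := Nat.le_mul_of_pos_right N hℓ
    omega
  have hlt := hN (i + N * ℓ) hNk
  rw [key] at hlt
  have hge : (0 : ℤ) ≤ π.wsum (i + ℓ) - π.wsum i := by
    rw [show i + ℓ = j from by omega]; omega
  have hNn : (0 : ℤ) ≤ (N : ℤ) := Int.natCast_nonneg N
  nlinarith

/-- Uniform bound on weights of path segments, given that all cycles on
consistent paths from `v` are negative. -/
lemma wsum_bound [Fintype V] (σ : V → V) (v : V)
    (hsm : ∀ π : G.Path, π.vert 0 = v → π.ConsMin σ → ∀ M : ℤ, ∃ N, ∀ k ≥ N, π.wsum k < M)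
    (W : ℤ) (hW0 : 0 ≤ W) (hW : ∀ a b : V, G.w a b ≤ W) :
    ∀ k n₀ : ℕ, ∀ π : G.Path, π.vert 0 = v → π.ConsMin σ →
      π.wsum (n₀ + k) - π.wsum n₀ ≤ (Fintype.card V : ℤ) * W := by
  intro k
  induction k using Nat.strong_induction_on with
  | _ k IH =>
  intro n₀ π hv hcons
  by_cases hk : k ≤ Fintype.card V
  · rw [wsum_add]
    have hsum : ∑ t ∈ Finset.range k, G.w (π.vert (n₀ + t)) (π.vert (n₀ + t + 1))
        ≤ ∑ _t ∈ Finset.range k, W := Finset.sum_le_sum fun t _ => hW _ _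
    rw [Finset.sum_const, Finset.card_range, nsmul_eq_mul] at hsum
    have h2 : (k : ℤ) * W ≤ (Fintype.card V : ℤ) * W :=
      mul_le_mul_of_nonneg_right (by exact_mod_cast hk) hW0
    linarith
  · have hcard : Fintype.card V < Fintype.card (Fin (Fintype.card V + 1)) := by simp
    obtain ⟨a, b, hab, he⟩ := Fintype.exists_ne_map_eq_of_card_lt
      (fun t : Fin (Fintype.card V + 1) => π.vert (n₀ + (t : ℕ))) hcard
    have hexists : ∃ p q : ℕ, p < q ∧ q ≤ Fintype.card V ∧
        π.vert (n₀ + q) = π.vert (n₀ + p) := by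
      rcases lt_or_gt_of_ne hab with h | h
      · exact ⟨a, b, h, by omega, he.symm⟩
      · exact ⟨b, a, h, by omega, he⟩
    obtain ⟨p, q, hpq, hqcard, heq⟩ := hexists
    have hneg := cycle_neg σ v hsm π hv hcons (n₀ + p) (n₀ + q) (by omega) heq
    have hρ0 : (shiftN π (n₀ + q)).vert 0 = π.vert (n₀ + p) := by
      rw [shiftN_vert, Nat.add_zero]; exact heq
    set π' := splice π (n₀ + p) (shiftN π (n₀ + q)) hρ0 with hπ'def
    have hv' : π'.vert 0 = v := by
      rw [hπ'def, splice_vert_of_le (Nat.zero_le _)]; exact hv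
    have hc' : π'.ConsMin σ := splice_cons hcons (shiftN_cons hcons _)
    set k' := k - (q - p) with hk'def
    have hk'lt : k' < k := by omega
    have hw1 : π'.wsum n₀ = π.wsum n₀ := splice_wsum_of_le (by omega)
    have hw2 : π'.wsum (n₀ + k')
        = π.wsum (n₀ + k) - (π.wsum (n₀ + q) - π.wsum (n₀ + p)) := by
      rw [show n₀ + k' = (n₀ + p) + (n₀ + k - (n₀ + q)) from by omega, hπ'def,
        splice_wsum_add, shiftN_wsum,
        show (n₀ + q) + (n₀ + k - (n₀ + q)) = n₀ + k from by omega]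
      ring
    have IHk := IH k' hk'lt n₀ π' hv' hc'
    rw [hw1, hw2] at IHk
    omega

end S18
namespace S18
open MPGame Filter Finset

variable {V : Type*} {G : MPGame V}

/-- Paths from `v` consistent with `σ`. -/
def Rooted (G : MPGame V) (σ : V → V) (v : V) (π : G.Path) : Prop :=
  π.vert 0 = v ∧ π.ConsMin σ

/-- The set of weights of segments of rooted paths starting at `u`. -/
def SS (G : MPGame V) (σ : V → V) (v : V) (u : V) (z : ℤ) : Prop :=
  ∃ π : G.Path, Rooted G σ v π ∧ ∃ n k : ℕ, π.vert n = u ∧ π.wsum (n + k) - π.wsum n = z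

/-- Vertices reachable by rooted paths. -/
def RR (G : MPGame V) (σ : V → V) (v : V) (u : V) : Prop :=
  ∃ π : G.Path, Rooted G σ v π ∧ ∃ n : ℕ, π.vert n = u

lemma SS_zero {σ : V → V} {v u : V} (h : RR G σ v u) : SS G σ v u 0 := by
  obtain ⟨π, hπ, n, hn⟩ := h
  exact ⟨π, hπ, n, 0, hn, by rw [Nat.add_zero]; ring⟩

lemma SS_bound [Fintype V] {σ : V → V} {v : V}
    (hsm : ∀ π : G.Path, π.vert 0 = v → π.ConsMin σ → ∀ M : ℤ, ∃ N, ∀ k ≥ N, π.wsum k < M)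
    (W : ℤ) (hW0 : 0 ≤ W) (hW : ∀ a b : V, G.w a b ≤ W)
    {u : V} {z : ℤ} (h : SS G σ v u z) : z ≤ (Fintype.card V : ℤ) * W := by
  obtain ⟨π, hπ, n, k, _, hz⟩ := h
  rw [← hz]
  exact wsum_bound σ v hsm W hW0 hW k n π hπ.1 hπ.2

/-- Taking a compatible step from `u` to `u'`. -/
lemma step_lemma {σ : V → V} (hleg : G.Legal σ) {v u u' : V}
    (hu : RR G σ v u) (he : G.E u u') (hcompat : G.IsMin u → u' = σ u) :
    RR G σ v u' ∧ ∀ z, SS G σ v u' z → SS G σ v u (G.w u u' + z) := by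
  obtain ⟨π, hπ, n, hn⟩ := hu
  constructor
  · -- u' is reachable
    set ρ := follow (comb G σ) (comb_legal hleg) u' with hρdef
    have heρ : G.E u (ρ.vert 0) := he
    have hξ0 : (prepend u ρ heρ).vert 0 = π.vert n := by rw [prepend_vert_zero, hn]
    set χ := splice π n (prepend u ρ heρ) hξ0 with hχdef
    refine ⟨χ, ⟨?_, ?_⟩, n + 1, ?_⟩
    · rw [hχdef, splice_vert_of_le (Nat.zero_le _)]; exact hπ.1
    · exact splice_cons hπ.2 (prepend_cons _ _ _
        (follow_cons _ (fun x hx => comb_min hx) u')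
        (fun hm => by rw [follow_vert_zero]; exact hcompat hm))
    · rw [hχdef, show n + 1 = n + (0 + 1) from rfl, splice_vert_add, prepend_vert_succ]
      rfl
  · -- weights transfer
    rintro z ⟨ρ, hρ, m, k, hm, hzval⟩
    have heρ : G.E u ((shiftN ρ m).vert 0) := by
      rw [shiftN_vert, Nat.add_zero, hm]; exact he
    have hξ0 : (prepend u (shiftN ρ m) heρ).vert 0 = π.vert n := by
      rw [prepend_vert_zero, hn]
    set χ := splice π n (prepend u (shiftN ρ m) heρ) hξ0 with hχdef
    have hχroot : Rooted G σ v χ := by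
      refine ⟨?_, ?_⟩
      · rw [hχdef, splice_vert_of_le (Nat.zero_le _)]; exact hπ.1
      · exact splice_cons hπ.2 (prepend_cons _ _ _ (shiftN_cons hρ.2 m)
          (fun hmm => by rw [shiftN_vert, Nat.add_zero, hm]; exact hcompat hmm))
    refine ⟨χ, hχroot, n, k + 1, ?_, ?_⟩
    · rw [hχdef, splice_vert_of_le le_rfl]; exact hn
    · rw [hχdef, splice_wsum_add, splice_wsum_of_le le_rfl, prepend_wsum, shiftN_wsum,
        shiftN_vert, Nat.add_zero, hm]
      omega

/-- If the maximal segment weight at `u` is positive, Min can step to a vertex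
realising it. -/
lemma attain_lemma {σ : V → V} {v u : V} {m : ℤ}
    (hmem : SS G σ v u m) (hpos : 0 < m) :
    ∃ u', G.E u u' ∧ (G.IsMin u → u' = σ u) ∧ SS G σ v u' (m - G.w u u') := by
  obtain ⟨π, hπ, n, k, hn, hz⟩ := hmem
  have hk : k ≠ 0 := by
    rintro rfl
    rw [Nat.add_zero] at hz
    omega
  refine ⟨π.vert (n + 1), by rw [← hn]; exact π.adj n,
    fun hm => by rw [← hn] at hm ⊢; exact hπ.2 n hm, π, hπ, n + 1, k - 1, rfl, ?_⟩
  have hsucc := wsum_succ π n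
  rw [hn] at hsucc
  rw [show n + 1 + (k - 1) = n + k from by omega]
  omega

/-- If all segment weights from `u` are nonpositive, all partial sums of
consistent paths from `u` are nonpositive. -/
lemma final_lemma {σ : V → V} {v u : V} (hu : RR G σ v u)
    (hall : ∀ z, SS G σ v u z → z ≤ 0) :
    ∀ ρ : G.Path, ρ.vert 0 = u → ρ.ConsMin σ → ∀ k, ρ.wsum k ≤ 0 := by
  intro ρ h0 hc k
  obtain ⟨π, hπ, n, hn⟩ := hu
  have hρ0 : ρ.vert 0 = π.vert n := by rw [h0, hn]
  set χ := splice π n ρ hρ0 with hχdef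
  apply hall
  refine ⟨χ, ⟨?_, splice_cons hπ.2 hc⟩, n, k, ?_, ?_⟩
  · rw [hχdef, splice_vert_of_le (Nat.zero_le _)]; exact hπ.1
  · rw [hχdef, splice_vert_of_le le_rfl]; exact hn
  · rw [hχdef, splice_wsum_add, splice_wsum_of_le le_rfl]
    ring

end S18

open S18

open MPGame in
/-- in a finite game with no zero cycle in which some
vertex has MP-value `< 0`, there is a vertex of `N` (at which Min can ensure
the first edge visited has weight `< 0`) whose `supΣ`-value is `0`. -/
theorem statement18 {V : Type*} [Fintype V] (G : MPGame V)
    (hz : G.NoZeroCycle)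
    (hw : ∃ v, G.MPval v < 0) :
    ∃ v ∈ G.Nset, G.supSigmaVal ∅ v = (0 : EReal) := by
  classical
  obtain ⟨v, hv⟩ := hw
  simp only [MPGame.MPval, MPGame.minVal] at hv
  obtain ⟨⟨σ, hleg⟩, hσ⟩ := iInf_lt_iff.mp hv
  have hMP : ∀ π : G.Path, π.vert 0 = v → π.ConsMin σ → MP π < 0 := fun π h1 h2 =>
    lt_of_le_of_lt
      (le_iSup (fun p : {π : G.Path // π.vert 0 = v ∧ π.ConsMin σ} => MP p.1) ⟨π, h1, h2⟩) hσ
  have hsm : ∀ π : G.Path, π.vert 0 = v → π.ConsMin σ → ∀ M : ℤ, ∃ N, ∀ k ≥ N, π.wsum k < M :=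
    fun π h1 h2 M => eventually_wsum_lt π (hMP π h1 h2) M
  haveI : Nonempty V := ⟨v⟩
  set W : ℤ := max 0 (Finset.sup' (Finset.univ : Finset (V × V)) Finset.univ_nonempty
    (fun p => G.w p.1 p.2)) with hWdef
  have hW0 : 0 ≤ W := le_max_left _ _
  have hW : ∀ a b : V, G.w a b ≤ W := fun a b =>
    le_max_of_le_right (Finset.le_sup' (fun p : V × V => G.w p.1 p.2) (Finset.mem_univ (a, b)))
  -- the maximal segment weight function f
  have hL3 : ∀ u, ∃ m : ℤ, RR G σ v u →
      SS G σ v u m ∧ (∀ z, SS G σ v u z → z ≤ m) ∧ 0 ≤ m := by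
    intro u
    by_cases h : RR G σ v u
    · obtain ⟨m, hm1, hm2⟩ := Int.exists_greatest_of_bdd
        ⟨(Fintype.card V : ℤ) * W, fun z hzz => SS_bound hsm W hW0 hW hzz⟩ ⟨0, SS_zero h⟩
      exact ⟨m, fun _ => ⟨hm1, hm2, hm2 0 (SS_zero h)⟩⟩
    · exact ⟨0, fun h' => absurd h' h⟩
  choose f hf using hL3
  -- the one-step progress lemma
  have hstep : ∀ u, RR G σ v u → (f u = 0 ∧ u ∈ G.Nset) ∨
      ∃ u', RR G σ v u' ∧ G.E u u' ∧ (G.IsMin u → u' = σ u) ∧ f u' = f u - G.w u u' := by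
    intro u hu
    obtain ⟨hmem, hmax, hpos⟩ := hf u hu
    by_cases h0 : 0 < f u
    · right
      obtain ⟨u', he, hcompat, hS'⟩ := attain_lemma hmem h0
      obtain ⟨hR', hup⟩ := step_lemma hleg hu he hcompat
      obtain ⟨hmem', hmax', hpos'⟩ := hf u' hR'
      have h1 : f u - G.w u u' ≤ f u' := hmax' _ hS'
      have h2 : G.w u u' + f u' ≤ f u := hmax _ (hup _ hmem')
      exact ⟨u', hR', he, hcompat, by omega⟩
    · have hfu : f u = 0 := by omega
      by_cases hN : u ∈ G.Nset
      · left; exact ⟨hfu, hN⟩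
      · right
        by_cases hmin : G.IsMin u
        · have hall : ∀ w', G.E u w' → 0 ≤ G.w u w' := by
            intro w' hew
            by_contra hlt
            push_neg at hlt
            exact hN ⟨trivial, Or.inl ⟨hmin, w', trivial, hew, hlt⟩⟩
          have he : G.E u (σ u) := hleg u
          obtain ⟨hR', hup⟩ := step_lemma hleg hu he (fun _ => rfl)
          obtain ⟨hmem', hmax', hpos'⟩ := hf _ hR'
          have h2 : G.w u (σ u) + f (σ u) ≤ f u := hmax _ (hup _ hmem')
          have h3 := hall _ he
          exact ⟨σ u, hR', he, fun _ => rfl, by omega⟩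
        · have hex : ∃ u', G.E u u' ∧ 0 ≤ G.w u u' := by
            by_contra hq
            push_neg at hq
            exact hN ⟨trivial, Or.inr ⟨hmin, fun w' _ hew => hq w' hew⟩⟩
          obtain ⟨u', he, hw0⟩ := hex
          obtain ⟨hR', hup⟩ := step_lemma hleg hu he (fun hm => absurd hm hmin)
          obtain ⟨hmem', hmax', hpos'⟩ := hf _ hR'
          have h2 : G.w u u' + f u' ≤ f u := hmax _ (hup _ hmem')
          exact ⟨u', hR', he, fun hm => absurd hm hmin, by omega⟩
  have hvR : RR G σ v v :=
    ⟨follow (comb G σ) (comb_legal hleg) v,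
      ⟨rfl, follow_cons _ (fun x hx => comb_min hx) v⟩, 0, rfl⟩
  -- there is a reachable vertex of N with f-value 0
  have hgoal : ∃ u, RR G σ v u ∧ f u = 0 ∧ u ∈ G.Nset := by
    by_contra hgoal
    push_neg at hgoal
    have hstep' : ∀ p : {u // RR G σ v u}, ∃ p' : {u // RR G σ v u},
        G.E p.1 p'.1 ∧ (G.IsMin p.1 → p'.1 = σ p.1) ∧ f p'.1 = f p.1 - G.w p.1 p'.1 := by
      rintro ⟨u, hu⟩
      rcases hstep u hu with ⟨h1, h2⟩ | ⟨u', hR', he, hcompat, hfeq⟩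
      · exact absurd h2 (hgoal u hu h1)
      · exact ⟨⟨u', hR'⟩, he, hcompat, hfeq⟩
    choose nxt hnxt1 hnxt2 hnxt3 using hstep'
    set δ : ℕ → {u // RR G σ v u} := fun k => nxt^[k] ⟨v, hvR⟩ with hδdef
    have hδsucc : ∀ k, δ (k + 1) = nxt (δ k) := fun k => Function.iterate_succ_apply' nxt k _
    set pa : G.Path := ⟨fun k => (δ k).1, fun k => by
      show G.E (δ k).1 (δ (k + 1)).1
      rw [hδsucc k]
      exact hnxt1 (δ k)⟩ with hpadef
    have hpavert : ∀ k, pa.vert k = (δ k).1 := fun _ => rfl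
    have hfδ : ∀ k, f (δ k).1 = f v - pa.wsum k := by
      intro k
      induction k with
      | zero =>
        show f v = f v - pa.wsum 0
        rw [wsum_zero]; ring
      | succ k ih =>
        have h3 := hnxt3 (δ k)
        have hws := wsum_succ pa k
        have hwk : G.w (pa.vert k) (pa.vert (k + 1)) = G.w (δ k).1 (nxt (δ k)).1 := by
          rw [hpavert, hpavert, hδsucc]
        rw [hwk] at hws
        rw [hδsucc]
        omega
    obtain ⟨a, b, hab, he⟩ := Fintype.exists_ne_map_eq_of_card_lt
      (fun t : Fin (Fintype.card V + 1) => pa.vert (t : ℕ)) (by simp)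
    have hexists : ∃ p q : ℕ, p < q ∧ pa.vert p = pa.vert q := by
      rcases lt_or_gt_of_ne hab with h | h
      · exact ⟨a, b, h, he⟩
      · exact ⟨b, a, h, he.symm⟩
    obtain ⟨p, q, hpq, heq⟩ := hexists
    have hfp := hfδ p
    have hfq := hfδ q
    have h5 : (δ p).1 = (δ q).1 := heq
    rw [h5] at hfp
    exact hz pa p q hpq heq (by omega)
  obtain ⟨u, huR, hfu, huN⟩ := hgoal
  obtain ⟨hmem, hmax, hpos⟩ := hf u huR
  have hub : ∀ ρ : G.Path, ρ.vert 0 = u → ρ.ConsMin σ → ∀ k, ρ.wsum k ≤ 0 :=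
    final_lemma huR (fun z hzz => by have := hmax z hzz; omega)
  refine ⟨u, huN, le_antisymm ?_ ?_⟩
  · simp only [MPGame.supSigmaVal, MPGame.minVal]
    refine le_trans (iInf_le _ ⟨σ, hleg⟩) ?_
    apply iSup_le
    rintro ⟨π, hπ0, hπc⟩
    simp only [MPGame.supSigma]
    apply iSup_le
    rintro ⟨k, -⟩
    have hk := hub π hπ0 hπc k
    have : ((π.wsum k : ℝ) : EReal) ≤ ((0 : ℝ) : EReal) :=
      EReal.coe_le_coe_iff.mpr (by exact_mod_cast hk)
    simpa using this
  · simp only [MPGame.supSigmaVal, MPGame.minVal]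
    refine le_iInf ?_
    rintro ⟨σ', hleg'⟩
    refine le_trans ?_ (le_iSup _ ⟨follow (comb G σ') (comb_legal hleg') u, rfl,
      follow_cons _ (fun x hx => comb_min hx) u⟩)
    simp only [MPGame.supSigma]
    refine le_trans ?_ (le_iSup _ ⟨0, fun i _ => Set.notMem_empty _⟩)
    rw [wsum_zero]
    simp
end
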